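/- arXiv:1708.01513 — 2 statements merged into one kernel-verified Lean document; each statement's English description precedes it below -/
import Mathlib

section
/- Let S and T be stochastic matrices on a finite set Ω, both reversible with respect to a fully supported probability measure μ and positive semidefinite in L²(μ), with S idempotent (S² = S). Then for every a ∈ [0,1], the spectral gaps satisfy λ(S T S) ≥ λ(aS + (1−a)T). -/
/-! Write `g = S f`. As `S` is an orthogonal projection in `L²(μ)` that preserves means,
`Var f = ‖f - g‖² + Var g`, and the Dirichlet form of `S T S` splits as
`E_{STS}(f) = ‖f - g‖² + E_T(g)`. On the range of `S` the form of `a S + (1 - a) T` is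
`(1 - a) E_T ≤ E_T`, so its gap `t` satisfies `t Var g ≤ E_T(g)`; positive semidefiniteness gives
`t ≤ 1`, and adding the two bounds yields `t Var f ≤ E_{STS}(f)`. -/

open scoped BigOperators

/-- Inner product in `L²(μ)`: `⟨f,g⟩_μ = Σ_x f(x)g(x)μ(x)`. -/
noncomputable def innerMu {Ω : Type*} [Fintype Ω] (μ f g : Ω → ℝ) : ℝ :=
  ∑ x, f x * g x * μ x

/-- Variance w.r.t. `μ`. -/
noncomputable def varMu {Ω : Type*} [Fintype Ω] (μ f : Ω → ℝ) : ℝ :=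
  ∑ x, (f x - ∑ y, f y * μ y) ^ 2 * μ x

/-- Dirichlet form `⟨f, (I − P) f⟩_μ`. -/
noncomputable def dirichletForm {Ω : Type*} [Fintype Ω]
    (μ : Ω → ℝ) (P : Matrix Ω Ω ℝ) (f : Ω → ℝ) : ℝ :=
  innerMu μ f (fun x => f x - P.mulVec f x)

/-- Spectral gap of a reversible positive semidefinite chain, via the variational
characterization `λ(P) = min { ⟨f,(I−P)f⟩_μ / Var_μ(f) : Var_μ(f) ≠ 0 }`. -/
noncomputable def gapD {Ω : Type*} [Fintype Ω] (μ : Ω → ℝ) (P : Matrix Ω Ω ℝ) : ℝ :=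
  sInf {r : ℝ | ∃ f : Ω → ℝ, varMu μ f ≠ 0 ∧ r = dirichletForm μ P f / varMu μ f}

section DirichletForm

open Matrix

variable {Ω : Type*} [Fintype Ω] (μ : Ω → ℝ)

lemma innerMu_self_nonneg (hpos : ∀ x, 0 < μ x) (f : Ω → ℝ) : 0 ≤ innerMu μ f f :=
  Finset.sum_nonneg fun x _ => mul_nonneg (mul_self_nonneg _) (hpos x).le

lemma innerMu_add_smul_mulVec (P Q : Matrix Ω Ω ℝ) (a b : ℝ) (f g : Ω → ℝ) :
    innerMu μ f ((a • P + b • Q) *ᵥ g) = a * innerMu μ f (P *ᵥ g) + b * innerMu μ f (Q *ᵥ g) := by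
  simp only [innerMu, add_mulVec, smul_mulVec, Pi.add_apply, Pi.smul_apply, smul_eq_mul,
    Finset.mul_sum, ← Finset.sum_add_distrib]
  exact Finset.sum_congr rfl fun x _ => by ring

lemma innerMu_mulVec_comm {P : Matrix Ω Ω ℝ} (hrev : ∀ x y, μ x * P x y = μ y * P y x)
    (f g : Ω → ℝ) : innerMu μ f (P *ᵥ g) = innerMu μ (P *ᵥ f) g := by
  simp only [innerMu, mulVec, dotProduct, Finset.mul_sum, Finset.sum_mul]
  rw [Finset.sum_comm]
  refine Finset.sum_congr rfl fun y _ => Finset.sum_congr rfl fun x _ => ?_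
  linear_combination f x * g y * hrev x y

lemma sum_mulVec_mul_eq {P : Matrix Ω Ω ℝ} (hrev : ∀ x y, μ x * P x y = μ y * P y x)
    (hrow : ∀ x, ∑ y, P x y = 1) (f : Ω → ℝ) :
    ∑ x, (P *ᵥ f) x * μ x = ∑ x, f x * μ x := by
  have hP1 : P *ᵥ (fun _ => 1) = fun _ => 1 := funext fun x => by
    simpa [mulVec, dotProduct] using hrow x
  simpa [innerMu, hP1] using innerMu_mulVec_comm μ hrev (fun _ => 1) f

lemma varMu_eq (hsum : ∑ x, μ x = 1) (f : Ω → ℝ) :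
    varMu μ f = innerMu μ f f - (∑ y, f y * μ y) ^ 2 := by
  set m := ∑ y, f y * μ y
  have expand : ∀ x, (f x - m) ^ 2 * μ x = f x * f x * μ x - 2 * m * (f x * μ x) + m ^ 2 * μ x :=
    fun x => by ring
  rw [varMu, innerMu, Finset.sum_congr rfl fun x _ => expand x, Finset.sum_add_distrib,
    Finset.sum_sub_distrib, ← Finset.mul_sum, ← Finset.mul_sum, hsum]
  ring

lemma varMu_nonneg (hpos : ∀ x, 0 < μ x) (f : Ω → ℝ) : 0 ≤ varMu μ f :=
  Finset.sum_nonneg fun x _ => mul_nonneg (sq_nonneg _) (hpos x).le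

lemma varMu_sub_const (hsum : ∑ x, μ x = 1) (f : Ω → ℝ) (c : ℝ) :
    varMu μ (fun x => f x - c) = varMu μ f := by
  have hmean : ∑ y, (f y - c) * μ y = ∑ y, f y * μ y - c := by
    simp only [sub_mul, Finset.sum_sub_distrib, ← Finset.mul_sum, hsum, mul_one]
  simp only [varMu, hmean, sub_sub_sub_cancel_right]

lemma dirichletForm_eq (P : Matrix Ω Ω ℝ) (f : Ω → ℝ) :
    dirichletForm μ P f = innerMu μ f f - innerMu μ f (P *ᵥ f) := by
  simp only [dirichletForm, innerMu, ← Finset.sum_sub_distrib]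
  exact Finset.sum_congr rfl fun x _ => by ring

lemma dirichletForm_add_smul (P Q : Matrix Ω Ω ℝ) {a b : ℝ} (hab : a + b = 1) (f : Ω → ℝ) :
    dirichletForm μ (a • P + b • Q) f = a * dirichletForm μ P f + b * dirichletForm μ Q f := by
  simp only [dirichletForm_eq, innerMu_add_smul_mulVec]
  linear_combination (-innerMu μ f f) * hab

lemma two_mul_dirichletForm {P : Matrix Ω Ω ℝ} (hrow : ∀ x, ∑ y, P x y = 1)
    (hrev : ∀ x y, μ x * P x y = μ y * P y x) (f : Ω → ℝ) :
    2 * dirichletForm μ P f = ∑ x, ∑ y, μ x * P x y * (f x - f y) ^ 2 := by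
  have hdiag : ∀ x, f x * f x * μ x = ∑ y, μ x * P x y * (f x * f x) := fun x => by
    rw [← Finset.sum_mul, ← Finset.mul_sum, hrow x, mul_one]; ring
  have hswap : ∑ x, ∑ y, μ x * P x y * (f y * f y) = ∑ x, ∑ y, μ x * P x y * (f x * f x) := by
    rw [Finset.sum_comm]
    refine Finset.sum_congr rfl fun x _ => Finset.sum_congr rfl fun y _ => ?_
    linear_combination f x * f x * hrev y x
  have hcross : innerMu μ f (P *ᵥ f) = ∑ x, ∑ y, μ x * P x y * (f x * f y) := by
    simp only [innerMu, mulVec, dotProduct, Finset.mul_sum, Finset.sum_mul]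
    exact Finset.sum_congr rfl fun x _ => Finset.sum_congr rfl fun y _ => by ring
  have expand : ∀ x y, μ x * P x y * (f x - f y) ^ 2 = μ x * P x y * (f x * f x)
      - 2 * (μ x * P x y * (f x * f y)) + μ x * P x y * (f y * f y) := fun x y => by ring
  rw [dirichletForm_eq, hcross, innerMu, Finset.sum_congr rfl fun x _ => hdiag x]
  simp only [expand, Finset.sum_add_distrib, Finset.sum_sub_distrib, ← Finset.mul_sum, hswap]
  ring

lemma dirichletForm_nonneg {P : Matrix Ω Ω ℝ} (hpos : ∀ x, 0 < μ x) (hnn : ∀ x y, 0 ≤ P x y)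
    (hrow : ∀ x, ∑ y, P x y = 1) (hrev : ∀ x y, μ x * P x y = μ y * P y x) (f : Ω → ℝ) :
    0 ≤ dirichletForm μ P f := by
  have : 0 ≤ 2 * dirichletForm μ P f := two_mul_dirichletForm μ hrow hrev f ▸
    Finset.sum_nonneg fun x _ => Finset.sum_nonneg fun y _ =>
      mul_nonneg (mul_nonneg (hpos x).le (hnn x y)) (sq_nonneg _)
  linarith

end DirichletForm

section Gap

variable {Ω : Type*} [Fintype Ω] {μ : Ω → ℝ} {P : Matrix Ω Ω ℝ}

lemma gapD_eq_zero_of_forall_varMu_eq_zero (h : ∀ f : Ω → ℝ, varMu μ f = 0) : gapD μ P = 0 := by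
  have : {r : ℝ | ∃ f : Ω → ℝ, varMu μ f ≠ 0 ∧ r = dirichletForm μ P f / varMu μ f} = ∅ :=
    Set.eq_empty_of_forall_notMem fun _ ⟨f, hf, _⟩ => hf (h f)
  rw [gapD, this, Real.sInf_empty]

lemma gapD_mul_varMu_le (hpos : ∀ x, 0 < μ x) (hE : ∀ f, 0 ≤ dirichletForm μ P f) (f : Ω → ℝ) :
    gapD μ P * varMu μ f ≤ dirichletForm μ P f := by
  rcases (varMu_nonneg μ hpos f).eq_or_lt with hf | hf
  · rw [← hf, mul_zero]
    exact hE f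
  · have hbdd : BddBelow
        {r : ℝ | ∃ f : Ω → ℝ, varMu μ f ≠ 0 ∧ r = dirichletForm μ P f / varMu μ f} :=
      ⟨0, fun _ ⟨g, _, hr⟩ => hr ▸ div_nonneg (hE g) (varMu_nonneg μ hpos g)⟩
    exact (le_div_iff₀ hf).mp (csInf_le hbdd ⟨f, hf.ne', rfl⟩)

lemma le_gapD_of_forall_mul_varMu_le (hpos : ∀ x, 0 < μ x) (hne : ∃ f : Ω → ℝ, varMu μ f ≠ 0)
    {t : ℝ} (h : ∀ f, t * varMu μ f ≤ dirichletForm μ P f) : t ≤ gapD μ P := by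
  obtain ⟨f₀, hf₀⟩ := hne
  refine le_csInf ⟨_, f₀, hf₀, rfl⟩ fun _ ⟨f, hf, hr⟩ => hr ▸ ?_
  exact (le_div_iff₀ ((varMu_nonneg μ hpos f).lt_of_ne' hf)).mpr (h f)

/-- Centring `f` makes its variance equal to its squared norm, which bounds the Dirichlet form of
a positive semidefinite `P`. -/
lemma gapD_le_one (hpos : ∀ x, 0 < μ x) (hsum : ∑ x, μ x = 1) (hne : ∃ f : Ω → ℝ, varMu μ f ≠ 0)
    (hE : ∀ f, 0 ≤ dirichletForm μ P f) (hpsd : ∀ f : Ω → ℝ, 0 ≤ innerMu μ f (P.mulVec f)) :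
    gapD μ P ≤ 1 := by
  obtain ⟨f, hf⟩ := hne
  set h := fun x => f x - ∑ y, f y * μ y
  have hmean : ∑ y, h y * μ y = 0 := by
    simp only [h, sub_mul, Finset.sum_sub_distrib, ← Finset.mul_sum, hsum, mul_one, sub_self]
  have hvar : varMu μ h = innerMu μ h h := by rw [varMu_eq μ hsum, hmean]; ring
  have hvar_pos : 0 < varMu μ h :=
    (varMu_nonneg μ hpos h).lt_of_ne' (by rwa [varMu_sub_const μ hsum])
  have hle : dirichletForm μ P h ≤ varMu μ h := by
    rw [dirichletForm_eq, hvar]; linarith [hpsd h]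
  nlinarith [gapD_mul_varMu_le hpos hE h]

end Gap

section Projection

open Matrix

variable {Ω : Type*} [Fintype Ω] (μ : Ω → ℝ) {S : Matrix Ω Ω ℝ}
  (hSrev : ∀ x y, μ x * S x y = μ y * S y x) (hidem : S * S = S)
include hSrev hidem

lemma innerMu_mulVec_of_idempotent (f : Ω → ℝ) :
    innerMu μ f (S *ᵥ f) = innerMu μ (S *ᵥ f) (S *ᵥ f) := by
  rw [← innerMu_mulVec_comm μ hSrev f (S *ᵥ f), mulVec_mulVec, hidem]

lemma dirichletForm_eq_of_idempotent (f : Ω → ℝ) :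
    dirichletForm μ S f = innerMu μ f f - innerMu μ (S *ᵥ f) (S *ᵥ f) := by
  rw [dirichletForm_eq, innerMu_mulVec_of_idempotent μ hSrev hidem]

lemma dirichletForm_mulVec_of_idempotent (f : Ω → ℝ) : dirichletForm μ S (S *ᵥ f) = 0 := by
  rw [dirichletForm_eq_of_idempotent μ hSrev hidem, mulVec_mulVec, hidem, sub_self]

/-- `dirichletForm μ S f` is the squared norm of `f - S f`, the component orthogonal to the range
of `S`. -/
lemma dirichletForm_nonneg_of_idempotent (hpos : ∀ x, 0 < μ x) (f : Ω → ℝ) :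
    0 ≤ dirichletForm μ S f := by
  have h := innerMu_self_nonneg μ hpos (f - S *ᵥ f)
  have hsymm := innerMu_mulVec_of_idempotent μ hSrev hidem f
  simp only [innerMu, Pi.sub_apply] at h hsymm
  rw [dirichletForm_eq_of_idempotent μ hSrev hidem, innerMu, innerMu]
  have expand : ∀ x, (f x - (S *ᵥ f) x) * (f x - (S *ᵥ f) x) * μ x = f x * f x * μ x
      - 2 * (f x * (S *ᵥ f) x * μ x) + (S *ᵥ f) x * (S *ᵥ f) x * μ x := fun x => by ring
  simp only [expand, Finset.sum_add_distrib, Finset.sum_sub_distrib, ← Finset.mul_sum] at h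
  linarith

lemma innerMu_mulVec_nonneg_of_idempotent (hpos : ∀ x, 0 < μ x) (f : Ω → ℝ) :
    0 ≤ innerMu μ f (S *ᵥ f) :=
  innerMu_mulVec_of_idempotent μ hSrev hidem f ▸ innerMu_self_nonneg μ hpos _

lemma dirichletForm_mul_mul (T : Matrix Ω Ω ℝ) (f : Ω → ℝ) :
    dirichletForm μ (S * T * S) f = dirichletForm μ S f + dirichletForm μ T (S *ᵥ f) := by
  simp only [dirichletForm_eq_of_idempotent μ hSrev hidem, dirichletForm_eq, ← mulVec_mulVec,
    innerMu_mulVec_comm μ hSrev f]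
  ring

lemma varMu_eq_dirichletForm_add_varMu_mulVec (hsum : ∑ x, μ x = 1)
    (hSrow : ∀ x, ∑ y, S x y = 1) (f : Ω → ℝ) :
    varMu μ f = dirichletForm μ S f + varMu μ (S *ᵥ f) := by
  rw [varMu_eq μ hsum, varMu_eq μ hsum, sum_mulVec_mul_eq μ hSrev hSrow,
    dirichletForm_eq_of_idempotent μ hSrev hidem]
  ring

/-- A Poincaré inequality with constant `t ≤ 1` for `T` on the range of `S` lifts to `S T S`,
since `S T S` acts as the identity form on the orthogonal complement of that range. -/
lemma mul_varMu_le_dirichletForm_mul_mul (hpos : ∀ x, 0 < μ x) (hsum : ∑ x, μ x = 1)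
    (hSrow : ∀ x, ∑ y, S x y = 1) {T : Matrix Ω Ω ℝ} {t : ℝ} (ht : t ≤ 1) (f : Ω → ℝ)
    (hT : t * varMu μ (S *ᵥ f) ≤ dirichletForm μ T (S *ᵥ f)) :
    t * varMu μ f ≤ dirichletForm μ (S * T * S) f := by
  rw [varMu_eq_dirichletForm_add_varMu_mulVec μ hSrev hidem hsum hSrow,
    dirichletForm_mul_mul μ hSrev hidem]
  nlinarith [dirichletForm_nonneg_of_idempotent μ hSrev hidem hpos f]

end Projection

theorem statement17_general {Ω : Type*} [Fintype Ω]
    (μ : Ω → ℝ) (hpos : ∀ x, 0 < μ x) (hsum : ∑ x, μ x = 1)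
    (S T : Matrix Ω Ω ℝ)
    (hSrow : ∀ x, ∑ y, S x y = 1)
    (hTnn : ∀ x y, 0 ≤ T x y) (hTrow : ∀ x, ∑ y, T x y = 1)
    (hSrev : ∀ x y, μ x * S x y = μ y * S y x)
    (hTrev : ∀ x y, μ x * T x y = μ y * T y x)
    (hTpsd : ∀ f : Ω → ℝ, 0 ≤ innerMu μ f (T.mulVec f))
    (hidem : S * S = S)
    (a : ℝ) (ha : a ∈ Set.Icc (0 : ℝ) 1) :
    gapD μ (a • S + (1 - a) • T) ≤ gapD μ (S * T * S) := by
  obtain ⟨ha0, ha1⟩ := ha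
  by_cases hvar : ∀ f : Ω → ℝ, varMu μ f = 0
  · rw [gapD_eq_zero_of_forall_varMu_eq_zero hvar, gapD_eq_zero_of_forall_varMu_eq_zero hvar]
  have hne : ∃ f : Ω → ℝ, varMu μ f ≠ 0 := not_forall.mp hvar
  have hES := dirichletForm_nonneg_of_idempotent μ hSrev hidem hpos
  have hET := dirichletForm_nonneg μ hpos hTnn hTrow hTrev
  have hEM f : dirichletForm μ (a • S + (1 - a) • T) f
      = a * dirichletForm μ S f + (1 - a) * dirichletForm μ T f :=
    dirichletForm_add_smul μ S T (add_sub_cancel a 1) f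
  have hEM_nonneg f : 0 ≤ dirichletForm μ (a • S + (1 - a) • T) f := by
    rw [hEM]; nlinarith [hES f, hET f]
  have hM_psd f : 0 ≤ innerMu μ f ((a • S + (1 - a) • T).mulVec f) := by
    rw [innerMu_add_smul_mulVec]
    nlinarith [innerMu_mulVec_nonneg_of_idempotent μ hSrev hidem hpos f, hTpsd f]
  have ht1 := gapD_le_one hpos hsum hne hEM_nonneg hM_psd
  refine le_gapD_of_forall_mul_varMu_le hpos hne fun f =>
    mul_varMu_le_dirichletForm_mul_mul μ hSrev hidem hpos hsum hSrow ht1 f ?_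
  -- On the range of `S` the form of `a S + (1 - a) T` is `(1 - a)` times that of `T`.
  have hgap := gapD_mul_varMu_le hpos hEM_nonneg (S.mulVec f)
  rw [hEM, dirichletForm_mulVec_of_idempotent μ hSrev hidem] at hgap
  nlinarith [hET (S.mulVec f)]

/-- If `S`, `T` are stochastic, reversible w.r.t. a fully supported `μ`, positive
semidefinite, and `S` is idempotent, then `λ(STS) ≥ λ(aS + (1−a)T)` for all `a ∈ [0,1]`. -/
theorem statement17 {Ω : Type*} [Fintype Ω] [DecidableEq Ω]
    (μ : Ω → ℝ) (hpos : ∀ x, 0 < μ x) (hsum : ∑ x, μ x = 1)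
    (S T : Matrix Ω Ω ℝ)
    (hSnn : ∀ x y, 0 ≤ S x y) (hSrow : ∀ x, ∑ y, S x y = 1)
    (hTnn : ∀ x y, 0 ≤ T x y) (hTrow : ∀ x, ∑ y, T x y = 1)
    (hSrev : ∀ x y, μ x * S x y = μ y * S y x)
    (hTrev : ∀ x y, μ x * T x y = μ y * T y x)
    (hSpsd : ∀ f : Ω → ℝ, 0 ≤ innerMu μ f (S.mulVec f))
    (hTpsd : ∀ f : Ω → ℝ, 0 ≤ innerMu μ f (T.mulVec f))
    (hidem : S * S = S)
    (a : ℝ) (ha : a ∈ Set.Icc (0 : ℝ) 1) :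
    gapD μ (a • S + (1 - a) • T) ≤ gapD μ (S * T * S) :=
  statement17_general μ hpos hsum S T hSrow hTnn hTrow hSrev hTrev hTpsd hidem a ha
end

section
/- Let S and T be stochastic matrices on a finite set Ω, both reversible with respect to a fully supported probability measure μ and positive semidefinite in L²(μ), with S idempotent (S² = S). Then for every a ∈ (0,1), the spectral gaps satisfy λ(S T S) ≤ (3 / (a²(1−a))) · λ(aS + (1−a)T). -/
open scoped BigOperators

section aux
variable {Ω : Type*} [Fintype Ω]

lemma dirichlet_eq (μ : Ω → ℝ) (P : Matrix Ω Ω ℝ) (f : Ω → ℝ) :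
    dirichletForm μ P f = innerMu μ f f - innerMu μ f (P.mulVec f) := by
  unfold dirichletForm innerMu
  rw [← Finset.sum_sub_distrib]
  exact Finset.sum_congr rfl fun x _ => by ring

lemma selfAdj (μ : Ω → ℝ) (P : Matrix Ω Ω ℝ)
    (hrev : ∀ x y, μ x * P x y = μ y * P y x) (f g : Ω → ℝ) :
    innerMu μ f (P.mulVec g) = innerMu μ g (P.mulVec f) := by
  unfold innerMu
  have h1 : ∀ (h k : Ω → ℝ) (x : Ω),
      h x * P.mulVec k x * μ x = ∑ y, h x * (P x y * k y) * μ x := by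
    intro h k x
    simp only [Matrix.mulVec, dotProduct]
    rw [Finset.mul_sum, Finset.sum_mul]
  simp_rw [h1]
  rw [Finset.sum_comm]
  refine Finset.sum_congr rfl fun y _ => Finset.sum_congr rfl fun x _ => ?_
  linear_combination (f x * g y) * hrev x y

lemma sos_le (μ : Ω → ℝ) (P : Matrix Ω Ω ℝ)
    (hnn : ∀ x y, 0 ≤ P x y) (hrow : ∀ x, ∑ y, P x y = 1)
    (hrev : ∀ x y, μ x * P x y = μ y * P y x) (hμ : ∀ x, 0 ≤ μ x)
    (f : Ω → ℝ) : 0 ≤ dirichletForm μ P f := by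
  rw [dirichlet_eq]
  have h1 : ∀ x, ∑ y, μ x * P x y * f x ^ 2 = f x * f x * μ x := by
    intro x
    have : ∑ y, μ x * P x y * f x ^ 2 = (μ x * f x ^ 2) * ∑ y, P x y := by
      rw [Finset.mul_sum]; exact Finset.sum_congr rfl fun y _ => by ring
    rw [this, hrow x]; ring
  have h2 : ∀ x, ∑ y, μ x * P x y * (f x * f y) = f x * P.mulVec f x * μ x := by
    intro x
    simp only [Matrix.mulVec, dotProduct]
    rw [Finset.mul_sum, Finset.sum_mul]
    exact Finset.sum_congr rfl fun y _ => by ring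
  have h3 : ∑ x, ∑ y, μ x * P x y * f y ^ 2 = ∑ x, f x * f x * μ x := by
    have step : ∑ x, ∑ y, μ x * P x y * f y ^ 2 = ∑ x, ∑ y, μ y * P y x * f y ^ 2 :=
      Finset.sum_congr rfl fun x _ => Finset.sum_congr rfl fun y _ => by
        linear_combination (f y ^ 2) * hrev x y
    rw [step, Finset.sum_comm]
    refine Finset.sum_congr rfl fun y _ => ?_
    have : ∑ x, μ y * P y x * f y ^ 2 = (μ y * f y ^ 2) * ∑ x, P y x := by
      rw [Finset.mul_sum]; exact Finset.sum_congr rfl fun x _ => by ring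
    rw [this, hrow y]; ring
  have key : ∑ x, ∑ y, μ x * P x y * (f x - f y) ^ 2
      = 2 * (innerMu μ f f - innerMu μ f (P.mulVec f)) := by
    have expand : ∀ x y, μ x * P x y * (f x - f y) ^ 2
        = μ x * P x y * f x ^ 2 - 2 * (μ x * P x y * (f x * f y)) + μ x * P x y * f y ^ 2 :=
      fun x y => by ring
    simp_rw [expand, Finset.sum_add_distrib, Finset.sum_sub_distrib, ← Finset.mul_sum]
    simp_rw [h1, h2]
    rw [h3]
    unfold innerMu
    ring
  have pos : 0 ≤ ∑ x, ∑ y, μ x * P x y * (f x - f y) ^ 2 :=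
    Finset.sum_nonneg fun x _ => Finset.sum_nonneg fun y _ =>
      mul_nonneg (mul_nonneg (hμ x) (hnn x y)) (sq_nonneg _)
  linarith [key ▸ pos]

lemma dirichlet_parallelogram (μ : Ω → ℝ) (P : Matrix Ω Ω ℝ) (g h : Ω → ℝ) :
    dirichletForm μ P (g - h) + dirichletForm μ P (g + h)
      = 2 * dirichletForm μ P g + 2 * dirichletForm μ P h := by
  unfold dirichletForm innerMu
  simp_rw [Matrix.mulVec_sub, Matrix.mulVec_add, Pi.sub_apply, Pi.add_apply]
  rw [← Finset.sum_add_distrib, Finset.mul_sum, Finset.mul_sum, ← Finset.sum_add_distrib]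
  exact Finset.sum_congr rfl fun x _ => by ring

lemma innerMu_self_sub (μ f u : Ω → ℝ) (hfu : innerMu μ u u = innerMu μ f u) :
    innerMu μ (fun x => f x - u x) (fun x => f x - u x)
      = innerMu μ f f - innerMu μ f u := by
  unfold innerMu at *
  have : ∀ x, (f x - u x) * (f x - u x) * μ x
      = f x * f x * μ x - 2 * (f x * u x * μ x) + u x * u x * μ x := fun x => by ring
  simp_rw [this, Finset.sum_add_distrib, Finset.sum_sub_distrib, ← Finset.mul_sum]
  rw [hfu]; ring

end aux

/-- If `S`, `T` are stochastic, reversible w.r.t. a fully supported `μ`, positive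
semidefinite, and `S` is idempotent, then
`λ(STS) ≤ (3/(a²(1−a))) · λ(aS + (1−a)T)` for all `a ∈ (0,1)`. -/
theorem statement18 {Ω : Type*} [Fintype Ω] [DecidableEq Ω]
    (μ : Ω → ℝ) (hpos : ∀ x, 0 < μ x) (hsum : ∑ x, μ x = 1)
    (S T : Matrix Ω Ω ℝ)
    (hSnn : ∀ x y, 0 ≤ S x y) (hSrow : ∀ x, ∑ y, S x y = 1)
    (hTnn : ∀ x y, 0 ≤ T x y) (hTrow : ∀ x, ∑ y, T x y = 1)
    (hSrev : ∀ x y, μ x * S x y = μ y * S y x)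
    (hTrev : ∀ x y, μ x * T x y = μ y * T y x)
    (hSpsd : ∀ f : Ω → ℝ, 0 ≤ innerMu μ f (S.mulVec f))
    (hTpsd : ∀ f : Ω → ℝ, 0 ≤ innerMu μ f (T.mulVec f))
    (hidem : S * S = S)
    (a : ℝ) (ha : a ∈ Set.Ioo (0 : ℝ) 1) :
    gapD μ (S * T * S) ≤ (3 / (a ^ 2 * (1 - a))) * gapD μ (a • S + (1 - a) • T) := by
  obtain ⟨ha0, ha1⟩ := ha
  have ha1' : 0 < 1 - a := by linarith
  have hC : 0 < 3 / (a ^ 2 * (1 - a)) := by positivity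
  set C := 3 / (a ^ 2 * (1 - a)) with hCdef
  have hμnn : ∀ x, 0 ≤ μ x := fun x => (hpos x).le
  have innerMu_comm : ∀ f g : Ω → ℝ, innerMu μ f g = innerMu μ g f := by
    intro f g; unfold innerMu; exact Finset.sum_congr rfl fun x _ => by ring
  -- pointwise Dirichlet form comparison
  have compare : ∀ f : Ω → ℝ,
      dirichletForm μ (S * T * S) f ≤ C * dirichletForm μ (a • S + (1 - a) • T) f := by
    intro f
    set u := S.mulVec f with hudef
    set w : Ω → ℝ := f - u with hwdef
    have hSu : S.mulVec u = u := by
      rw [hudef, Matrix.mulVec_mulVec, hidem]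
    have hfu : innerMu μ u u = innerMu μ f u := by
      have h := selfAdj μ S hSrev f u
      rw [hSu, ← hudef] at h
      exact h.symm
    -- (i)  D_{STS}(f) = D_S(f) + D_T(u)
    have hSTS : dirichletForm μ (S * T * S) f
        = dirichletForm μ S f + dirichletForm μ T u := by
      rw [dirichlet_eq, dirichlet_eq, dirichlet_eq, ← hudef]
      have hmv : (S * T * S).mulVec f = S.mulVec (T.mulVec u) := by
        rw [hudef, Matrix.mulVec_mulVec, Matrix.mulVec_mulVec]
      have hcross : innerMu μ f ((S * T * S).mulVec f) = innerMu μ u (T.mulVec u) := by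
        rw [hmv, selfAdj μ S hSrev f (T.mulVec u), ← hudef, innerMu_comm]
      rw [hcross]
      linarith [hfu]
    -- (ii) D_T(u) ≤ 2 D_T(f) + 2 D_T(w)
    have hpar := dirichlet_parallelogram μ T f w
    have hcanc : f - w = u := by rw [hwdef]; exact sub_sub_cancel f u
    rw [hcanc] at hpar
    have hplus : 0 ≤ dirichletForm μ T (f + w) := sos_le μ T hTnn hTrow hTrev hμnn _
    have hii : dirichletForm μ T u ≤ 2 * dirichletForm μ T f + 2 * dirichletForm μ T w := by
      linarith
    -- (iii) D_T(w) ≤ D_S(f)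
    have hww : innerMu μ w w = dirichletForm μ S f := by
      rw [dirichlet_eq, ← hudef]
      exact innerMu_self_sub μ f u hfu
    have hiii : dirichletForm μ T w ≤ dirichletForm μ S f := by
      rw [dirichlet_eq, hww]
      linarith [hTpsd w]
    -- (iv) linearity
    have hM : dirichletForm μ (a • S + (1 - a) • T) f
        = a * dirichletForm μ S f + (1 - a) * dirichletForm μ T f := by
      unfold dirichletForm innerMu
      rw [Finset.mul_sum, Finset.mul_sum, ← Finset.sum_add_distrib]
      refine Finset.sum_congr rfl fun x _ => ?_
      simp only [Matrix.add_mulVec, Matrix.smul_mulVec, Pi.add_apply, Pi.smul_apply,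
        smul_eq_mul]
      ring
    have hDS : 0 ≤ dirichletForm μ S f := sos_le μ S hSnn hSrow hSrev hμnn f
    have hDT : 0 ≤ dirichletForm μ T f := sos_le μ T hTnn hTrow hTrev hμnn f
    have hca : 3 ≤ C * a := by
      rw [hCdef, div_mul_eq_mul_div, le_div_iff₀ (by positivity)]
      nlinarith
    have hcb : 2 ≤ C * (1 - a) := by
      rw [hCdef, div_mul_eq_mul_div, le_div_iff₀ (by positivity)]
      have h2 : a ^ 2 ≤ 1 := by nlinarith
      nlinarith [mul_nonneg ha1'.le (sq_nonneg a)]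
    calc dirichletForm μ (S * T * S) f
        ≤ 3 * dirichletForm μ S f + 2 * dirichletForm μ T f := by linarith
      _ ≤ (C * a) * dirichletForm μ S f + (C * (1 - a)) * dirichletForm μ T f := by
          have h1 := mul_le_mul_of_nonneg_right hca hDS
          have h2 := mul_le_mul_of_nonneg_right hcb hDT
          linarith
      _ = C * dirichletForm μ (a • S + (1 - a) • T) f := by rw [hM]; ring
  -- nonnegativity of the STS Dirichlet form
  have hSTSnn : ∀ f : Ω → ℝ, 0 ≤ dirichletForm μ (S * T * S) f := by
    intro f
    set u := S.mulVec f with hudef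
    have hSu : S.mulVec u = u := by rw [hudef, Matrix.mulVec_mulVec, hidem]
    have hfu : innerMu μ u u = innerMu μ f u := by
      have h := selfAdj μ S hSrev f u
      rw [hSu, ← hudef] at h
      exact h.symm
    have hSTS : dirichletForm μ (S * T * S) f
        = dirichletForm μ S f + dirichletForm μ T u := by
      rw [dirichlet_eq, dirichlet_eq, dirichlet_eq, ← hudef]
      have hmv : (S * T * S).mulVec f = S.mulVec (T.mulVec u) := by
        rw [hudef, Matrix.mulVec_mulVec, Matrix.mulVec_mulVec]
      have hcross : innerMu μ f ((S * T * S).mulVec f) = innerMu μ u (T.mulVec u) := by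
        rw [hmv, selfAdj μ S hSrev f (T.mulVec u), ← hudef]
        unfold innerMu; exact Finset.sum_congr rfl fun x _ => by ring
      rw [hcross]
      linarith [hfu]
    rw [hSTS]
    have h1 := sos_le μ S hSnn hSrow hSrev hμnn f
    have h2 := sos_le μ T hTnn hTrow hTrev hμnn u
    linarith
  have varnn : ∀ f : Ω → ℝ, 0 ≤ varMu μ f := by
    intro f; unfold varMu
    exact Finset.sum_nonneg fun x _ => mul_nonneg (sq_nonneg _) (hμnn x)
  have varpos : ∀ f : Ω → ℝ, varMu μ f ≠ 0 → 0 < varMu μ f :=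
    fun f hf => lt_of_le_of_ne (varnn f) (Ne.symm hf)
  by_cases hex : ∃ f : Ω → ℝ, varMu μ f ≠ 0
  · obtain ⟨f0, hf0⟩ := hex
    unfold gapD
    set A := {r : ℝ | ∃ f : Ω → ℝ, varMu μ f ≠ 0 ∧
      r = dirichletForm μ (S * T * S) f / varMu μ f} with hAdef
    set B := {r : ℝ | ∃ f : Ω → ℝ, varMu μ f ≠ 0 ∧
      r = dirichletForm μ (a • S + (1 - a) • T) f / varMu μ f} with hBdef
    have hBne : B.Nonempty := ⟨_, f0, hf0, rfl⟩
    have hAbdd : BddBelow A := by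
      refine ⟨0, fun r hr => ?_⟩
      obtain ⟨f, hf, rfl⟩ := hr
      exact div_nonneg (hSTSnn f) (varnn f)
    have key : sInf A / C ≤ sInf B := by
      refine le_csInf hBne ?_
      rintro r ⟨f, hf, rfl⟩
      have hv := varpos f hf
      have h1 : sInf A ≤ dirichletForm μ (S * T * S) f / varMu μ f :=
        csInf_le hAbdd ⟨f, hf, rfl⟩
      have h2 : dirichletForm μ (S * T * S) f / varMu μ f
          ≤ C * (dirichletForm μ (a • S + (1 - a) • T) f / varMu μ f) := by
        rw [← mul_div_assoc]
        exact (div_le_div_iff_of_pos_right hv).mpr (compare f)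
      rw [div_le_iff₀ hC, mul_comm]
      exact h1.trans h2
    calc sInf A = C * (sInf A / C) := by field_simp
      _ ≤ C * sInf B := mul_le_mul_of_nonneg_left key hC.le
  · push_neg at hex
    have hA : {r : ℝ | ∃ f : Ω → ℝ, varMu μ f ≠ 0 ∧
        r = dirichletForm μ (S * T * S) f / varMu μ f} = ∅ :=
      Set.eq_empty_iff_forall_notMem.mpr fun r ⟨f, hf, _⟩ => hf (hex f)
    have hB : {r : ℝ | ∃ f : Ω → ℝ, varMu μ f ≠ 0 ∧
        r = dirichletForm μ (a • S + (1 - a) • T) f / varMu μ f} = ∅ :=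
      Set.eq_empty_iff_forall_notMem.mpr fun r ⟨f, hf, _⟩ => hf (hex f)
    unfold gapD
    rw [hA, hB, Real.sInf_empty, mul_zero]
end
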